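/- Suppose t ≥ 1 is an integer and p ≥ t is a real number such that every finite graph H with Hadwiger number η(H) ≤ t satisfies p·α(H) ≥ |V(H)|. Then every finite graph G with η(G) ≥ t satisfies α(G) ≥ (2|V(G)| − p)/(4η(G) + 2p − 4t) + 1/2. -/

import Mathlib

open SimpleGraph

/-- A set of vertices is independent: no two of its vertices are adjacent. -/
def IsIndepSet {V : Type*} (G : SimpleGraph V) (s : Set V) : Prop :=
  s.Pairwise fun a b => ¬ G.Adj a b

/-- The independence number of a graph. -/
noncomputable def indepNum {V : Type*} [Fintype V] (G : SimpleGraph V) : ℕ :=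
  sSup {n | ∃ s : Finset V, _root_.IsIndepSet G ↑s ∧ s.card = n}

/-- A set of vertices is connected if it induces a connected subgraph. -/
def IsConnSet {V : Type*} (G : SimpleGraph V) (s : Set V) : Prop :=
  (G.induce s).Connected

/-- A set of vertices is dominating if every vertex outside it has a neighbour in it. -/
def IsDomSet {V : Type*} (G : SimpleGraph V) (s : Set V) : Prop :=
  ∀ v ∉ s, ∃ u ∈ s, G.Adj u v

/-- `G` has a `K_n`-minor, witnessed by `n` pairwise disjoint nonempty connected
branch sets with an edge between each pair. -/
def HasCliqueMinor {V : Type*} (G : SimpleGraph V) (n : ℕ) : Prop :=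
  ∃ B : Fin n → Set V,
    (∀ i, (B i).Nonempty) ∧
    (∀ i, IsConnSet G (B i)) ∧
    (Pairwise fun i j => Disjoint (B i) (B j)) ∧
    (Pairwise fun i j => ∃ u ∈ B i, ∃ v ∈ B j, G.Adj u v)

/-- The Hadwiger number: the largest `n` such that `K_n` is a minor of `G`. -/
noncomputable def hadwigerNum {V : Type*} [Fintype V] (G : SimpleGraph V) : ℕ :=
  sSup {n | HasCliqueMinor G n}

/-!
One shows `|V| ≤ (2α - 1)(η - t)⁺ + p α` by strong induction on the number of vertices, which
rearranges to the theorem. If `η ≤ t` this is the hypothesis. If `G` is disconnected, split it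
into a component and the rest: the independence numbers add, the Hadwiger numbers do not grow,
and `(2α₁ - 1) + (2α₂ - 1) ≤ 2(α₁ + α₂) - 1`. If `G` is connected, it has a connected dominating
set `D` with `|D| ≤ 2α - 1`, and `D` is a branch set adjacent to every branch set of a clique
minor of `G - D`, so `η(G - D) ≤ η - 1`.
-/

section IndependenceNumber

variable {V W : Type*} {G : SimpleGraph V} {H : SimpleGraph W}

theorem indepNum_eq_indepNum [Fintype V] (G : SimpleGraph V) :
    _root_.indepNum G = G.indepNum := by
  simp only [_root_.indepNum, SimpleGraph.indepNum, isNIndepSet_iff, _root_.IsIndepSet,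
    SimpleGraph.IsIndepSet]

theorem one_le_indepNum [Finite V] [Nonempty V] (G : SimpleGraph V) : 1 ≤ G.indepNum := by
  obtain ⟨v⟩ := ‹Nonempty V›
  have hv : G.IsIndepSet ↑({v} : Finset V) := by simp [SimpleGraph.IsIndepSet]
  simpa using hv.card_le_indepNum

theorem SimpleGraph.IsIndepSet.image_embedding {s : Set W} (hs : H.IsIndepSet s) (f : H ↪g G) :
    G.IsIndepSet (f '' s) := by
  rintro _ ⟨x, hx, rfl⟩ _ ⟨y, hy, rfl⟩ hxy
  rw [f.map_adj_iff]
  exact hs hx hy fun h => hxy (congrArg f h)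

theorem exists_isIndepSet_subset_range_card_eq_indepNum [Finite W] (f : H ↪g G) :
    ∃ s : Finset V, ↑s ⊆ Set.range f ∧ G.IsIndepSet ↑s ∧ s.card = H.indepNum := by
  classical
  obtain ⟨s, hs, hcard⟩ := H.exists_isNIndepSet_indepNum
  refine ⟨s.map f.toEmbedding, by simp, ?_, by simp [hcard]⟩
  simpa [Finset.coe_map] using hs.image_embedding f

theorem indepNum_le_of_embedding [Finite V] [Finite W] (f : H ↪g G) :
    H.indepNum ≤ G.indepNum := by
  obtain ⟨s, -, hs, hcard⟩ := exists_isIndepSet_subset_range_card_eq_indepNum f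
  exact hcard ▸ hs.card_le_indepNum

theorem indepNum_induce_add_indepNum_induce_compl_le [Fintype V] [DecidableEq V] (s : Finset V)
    (hs : ∀ a ∈ s, ∀ b ∉ s, ¬ G.Adj a b) :
    (G.induce ↑s).indepNum + (G.induce ↑sᶜ).indepNum ≤ G.indepNum := by
  obtain ⟨I, hIs, hI, hIcard⟩ :=
    exists_isIndepSet_subset_range_card_eq_indepNum (Embedding.induce (G := G) ↑s)
  obtain ⟨J, hJs, hJ, hJcard⟩ :=
    exists_isIndepSet_subset_range_card_eq_indepNum (Embedding.induce (G := G) ↑sᶜ)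
  replace hIs : (↑I : Set V) ⊆ ↑s := hIs.trans_eq Subtype.range_coe
  replace hJs : (↑J : Set V) ⊆ ↑sᶜ := hJs.trans_eq Subtype.range_coe
  have hdisj : Disjoint I J := by
    rw [← Finset.disjoint_coe]
    exact (Finset.disjoint_coe.mpr disjoint_compl_right).mono hIs hJs
  have hind : G.IsIndepSet ↑(I ∪ J) := by
    rw [Finset.coe_union]
    refine Set.pairwise_union.mpr ⟨hI, hJ, fun a ha b hb _ => ⟨?_, ?_⟩⟩
    · exact hs a (hIs ha) b (by simpa using hJs hb)
    · exact fun h => hs a (hIs ha) b (by simpa using hJs hb) h.symm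
  have := hind.card_le_indepNum
  rwa [Finset.card_union_of_disjoint hdisj, hIcard, hJcard] at this

end IndependenceNumber

section Connectivity

variable {V W : Type*} {G : SimpleGraph V} {H : SimpleGraph W}

theorem IsConnSet.image_embedding {s : Set W} (hs : IsConnSet H s) (f : H ↪g G) :
    IsConnSet G (f '' s) :=
  hs.map (induceHom f.toHom (Set.mapsTo_image f s)) (Set.surjective_mapsTo_image_restrict f s)

theorem IsConnSet.insert_of_adj {C : Set V} (hC : IsConnSet G C) {u v : V} (hu : u ∈ C)
    (huv : G.Adj u v) : IsConnSet G (insert v C) := by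
  have : insert v C = {v, u} ∪ C := by
    rw [Set.insert_union, Set.singleton_union, Set.insert_eq_of_mem hu]
  rw [IsConnSet, this]
  exact induce_union_connected (induce_pair_connected_of_adj huv.symm).preconnected
    hC.preconnected ⟨u, by simp, hu⟩

theorem exists_adj_adj_of_not_isDomSet (hG : G.Connected) {C : Set V} (hC : C.Nonempty)
    (hdom : ¬ IsDomSet G C) :
    ∃ a b, a ∉ C ∧ (∀ c ∈ C, ¬ G.Adj c a) ∧ G.Adj a b ∧ ∃ c ∈ C, G.Adj c b := by
  simp only [IsDomSet, not_forall, not_exists, not_and, exists_prop] at hdom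
  obtain ⟨v, hvC, hv⟩ := hdom
  obtain ⟨c, hc⟩ := hC
  obtain ⟨d, -, ⟨haC, ha⟩, hb⟩ := (hG v c).some.exists_boundary_dart
    {w | w ∉ C ∧ ∀ u ∈ C, ¬ G.Adj u w} ⟨hvC, hv⟩ (fun h => h.1 hc)
  refine ⟨d.fst, d.snd, haC, ha, d.adj, ?_⟩
  by_cases hbC : d.snd ∈ C
  · exact absurd d.adj.symm (ha _ hbC)
  · simpa [hbC] using hb

theorem exists_insert_insert_of_not_isDomSet [DecidableEq V] (hG : G.Connected)
    {C I : Finset V} (hC : IsConnSet G ↑C) (hCne : C.Nonempty) (hIC : I ⊆ C)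
    (hI : G.IsIndepSet ↑I) (hdom : ¬ IsDomSet G ↑C) :
    ∃ a b, a ∉ I ∧ insert a I ⊆ insert a (insert b C) ∧ IsConnSet G ↑(insert a (insert b C)) ∧
      G.IsIndepSet ↑(insert a I) ∧ (insert a (insert b C)).card = C.card + 2 := by
  obtain ⟨a, b, haC, ha, hab, c, hc, hcb⟩ :=
    exists_adj_adj_of_not_isDomSet hG (Finset.coe_nonempty.mpr hCne) hdom
  replace haC : a ∉ C := haC
  have hbC : b ∉ C := fun h => ha b h hab.symm
  refine ⟨a, b, fun h => haC (hIC h),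
    Finset.insert_subset_insert a (hIC.trans (Finset.subset_insert b C)), ?_, ?_, ?_⟩
  · rw [Finset.coe_insert, Finset.coe_insert]
    exact (hC.insert_of_adj hc hcb).insert_of_adj (Set.mem_insert b _) hab.symm
  · rw [Finset.coe_insert]
    exact hI.insert fun x hx _ => ⟨fun h => ha x (hIC hx) h.symm, ha x (hIC hx)⟩
  · rw [Finset.card_insert_of_notMem (by simp [hab.ne, haC]), Finset.card_insert_of_notMem hbC]

/-- Grow a connected set `C` together with an independent `I ⊆ C` with `|C| = 2|I| - 1`, two
vertices at a time, until `C` dominates. -/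
theorem exists_isDomSet_isConnSet [Fintype V] (hG : G.Connected) :
    ∃ D : Finset V, D.Nonempty ∧ IsConnSet G ↑D ∧ IsDomSet G ↑D ∧
      D.card + 1 ≤ 2 * G.indepNum := by
  classical
  obtain ⟨v⟩ := hG.nonempty
  let P : Finset V × Finset V → Prop := fun CI =>
    CI.2 ⊆ CI.1 ∧ IsConnSet G ↑CI.1 ∧ G.IsIndepSet ↑CI.2 ∧ CI.1.card + 1 = 2 * CI.2.card
  have hv : P ({v}, {v}) := by
    refine ⟨subset_rfl, ?_, by simp [SimpleGraph.IsIndepSet], by simp⟩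
    rw [IsConnSet, Finset.coe_singleton, induce_singleton_eq_top]
    exact connected_top
  obtain ⟨⟨C, I⟩, hCI, hmax⟩ := (Finset.univ.filter P).exists_max_image (fun CI => CI.2.card)
    ⟨_, Finset.mem_filter.mpr ⟨Finset.mem_univ _, hv⟩⟩
  simp only [Finset.mem_filter, Finset.mem_univ, true_and, Prod.forall] at hCI hmax
  obtain ⟨hIC, hC, hI, hcard⟩ := hCI
  dsimp only at hIC hC hI hcard hmax
  have hCne : C.Nonempty := Finset.card_pos.mp (by
    have := Finset.card_le_card hIC
    omega)
  refine ⟨C, hCne, hC, ?_, ?_⟩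
  · by_contra hdom
    obtain ⟨a, b, haI, hIC', hC', hI', hcard'⟩ :=
      exists_insert_insert_of_not_isDomSet hG hC hCne hIC hI hdom
    have := hmax _ _ ⟨hIC', hC', hI', by rw [hcard', Finset.card_insert_of_notMem haI]; omega⟩
    rw [Finset.card_insert_of_notMem haI] at this
    omega
  · calc C.card + 1 = 2 * I.card := hcard
      _ ≤ 2 * G.indepNum := by grw [hI.card_le_indepNum]

end Connectivity

theorem pairwise_finCons {α : Type*} {r : α → α → Prop} (hr : ∀ a b, r a b → r b a) {n : ℕ}
    {x : α} {f : Fin n → α} (hx : ∀ i, r x (f i)) (hf : Pairwise fun i j => r (f i) (f j)) :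
    Pairwise fun i j =>
      r ((Fin.cons x f : Fin (n + 1) → α) i) ((Fin.cons x f : Fin (n + 1) → α) j) := by
  intro i j hij
  cases i using Fin.cases <;> cases j using Fin.cases
  · exact absurd rfl hij
  · simpa using hx _
  · simpa using hr _ _ (hx _)
  · simpa using hf fun h => hij (congrArg Fin.succ h)

section CliqueMinor

variable {V W : Type*} {G : SimpleGraph V} {H : SimpleGraph W} {n : ℕ}

structure IsCliqueMinorModel (G : SimpleGraph V) (B : Fin n → Set V) : Prop where
  nonempty : ∀ i, (B i).Nonempty
  isConnSet : ∀ i, IsConnSet G (B i)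
  disjoint : Pairwise fun i j => Disjoint (B i) (B j)
  adj : Pairwise fun i j => ∃ u ∈ B i, ∃ v ∈ B j, G.Adj u v

theorem hasCliqueMinor_iff : HasCliqueMinor G n ↔ ∃ B : Fin n → Set V, IsCliqueMinorModel G B :=
  ⟨fun ⟨B, h₁, h₂, h₃, h₄⟩ => ⟨B, h₁, h₂, h₃, h₄⟩,
    fun ⟨B, h₁, h₂, h₃, h₄⟩ => ⟨B, h₁, h₂, h₃, h₄⟩⟩

theorem IsCliqueMinorModel.image_embedding {B : Fin n → Set W} (hB : IsCliqueMinorModel H B)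
    (f : H ↪g G) : IsCliqueMinorModel G fun i => f '' B i where
  nonempty i := (hB.nonempty i).image f
  isConnSet i := (hB.isConnSet i).image_embedding f
  disjoint i j hij := (Set.disjoint_image_iff f.injective).mpr (hB.disjoint hij)
  adj i j hij := by
    obtain ⟨u, hu, v, hv, huv⟩ := hB.adj hij
    exact ⟨f u, Set.mem_image_of_mem f hu, f v, Set.mem_image_of_mem f hv,
      f.map_adj_iff.mpr huv⟩

theorem IsCliqueMinorModel.cons {B : Fin n → Set V} (hB : IsCliqueMinorModel G B) {D : Set V}
    (hD : D.Nonempty) (hDc : IsConnSet G D) (hdisj : ∀ i, Disjoint D (B i))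
    (hadj : ∀ i, ∃ u ∈ D, ∃ v ∈ B i, G.Adj u v) :
    IsCliqueMinorModel G (Fin.cons D B : Fin (n + 1) → Set V) where
  nonempty := Fin.forall_fin_succ.mpr ⟨by simpa using hD, by simpa using hB.nonempty⟩
  isConnSet := Fin.forall_fin_succ.mpr ⟨by simpa using hDc, by simpa using hB.isConnSet⟩
  disjoint := pairwise_finCons (fun _ _ h => h.symm) hdisj hB.disjoint
  adj := pairwise_finCons (r := fun X Y => ∃ u ∈ X, ∃ v ∈ Y, G.Adj u v)
    (fun _ _ ⟨u, hu, v, hv, huv⟩ => ⟨v, hv, u, hu, huv.symm⟩) hadj hB.adj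

theorem HasCliqueMinor.le_card [Fintype V] (h : HasCliqueMinor G n) : n ≤ Fintype.card V := by
  obtain ⟨B, hB⟩ := hasCliqueMinor_iff.mp h
  have hinj : Function.Injective fun i => (hB.nonempty i).some := fun i j hij => by
    replace hij : (hB.nonempty i).some = (hB.nonempty j).some := hij
    by_contra hne
    exact Set.disjoint_left.mp (hB.disjoint hne) (hB.nonempty i).some_mem
      (hij ▸ (hB.nonempty j).some_mem)
  simpa using Fintype.card_le_of_injective _ hinj

theorem hasCliqueMinor_zero : HasCliqueMinor G 0 :=
  ⟨Fin.elim0, Fin.rec0, Fin.rec0, Fin.rec0, Fin.rec0⟩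

theorem hasCliqueMinor_bddAbove [Fintype V] : BddAbove {n | HasCliqueMinor G n} :=
  ⟨Fintype.card V, fun _ h => HasCliqueMinor.le_card h⟩

theorem hasCliqueMinor_hadwigerNum [Fintype V] : HasCliqueMinor G (hadwigerNum G) :=
  Nat.sSup_mem ⟨0, hasCliqueMinor_zero⟩ hasCliqueMinor_bddAbove

theorem HasCliqueMinor.le_hadwigerNum [Fintype V] (h : HasCliqueMinor G n) : n ≤ hadwigerNum G :=
  le_csSup hasCliqueMinor_bddAbove h

theorem hadwigerNum_le_card [Fintype V] (G : SimpleGraph V) : hadwigerNum G ≤ Fintype.card V :=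
  hasCliqueMinor_hadwigerNum.le_card

theorem hadwigerNum_le_of_embedding [Fintype V] [Fintype W] (f : H ↪g G) :
    hadwigerNum H ≤ hadwigerNum G := by
  obtain ⟨B, hB⟩ := hasCliqueMinor_iff.mp (hasCliqueMinor_hadwigerNum (G := H))
  exact (hasCliqueMinor_iff.mpr ⟨_, hB.image_embedding f⟩).le_hadwigerNum

/-- A connected set `D` dominating a disjoint set `s` can serve as one more branch set. -/
theorem hadwigerNum_induce_add_one_le [Fintype V] {s D : Set V} [Fintype s] (hD : D.Nonempty)
    (hDc : IsConnSet G D) (hDs : Disjoint D s) (hdom : ∀ v ∈ s, ∃ u ∈ D, G.Adj u v) :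
    hadwigerNum (G.induce s) + 1 ≤ hadwigerNum G := by
  obtain ⟨B, hB⟩ := hasCliqueMinor_iff.mp (hasCliqueMinor_hadwigerNum (G := G.induce s))
  have hB' := hB.image_embedding (Embedding.induce s)
  have hsub : ∀ i, Embedding.induce (G := G) s '' B i ⊆ s := fun i =>
    (Set.image_subset_range _ _).trans_eq Subtype.range_coe
  refine (hasCliqueMinor_iff.mpr ⟨_, hB'.cons hD hDc (fun i => hDs.mono_right (hsub i)) ?_⟩)
    |>.le_hadwigerNum
  intro i
  obtain ⟨v, hv⟩ := hB'.nonempty i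
  obtain ⟨u, hu, huv⟩ := hdom v (hsub i hv)
  exact ⟨u, hu, v, hv, huv⟩

end CliqueMinor

/-- The subtraction `e - t` is truncated: the bound reads `(2a - 1)(e - t)⁺ + p a`. -/
noncomputable def cardBound (t : ℕ) (p : ℝ) (a e : ℕ) : ℝ :=
  (2 * a - 1) * ((e - t : ℕ) : ℝ) + p * a

section CardBound

variable {t : ℕ} {p : ℝ}

theorem cardBound_of_le {a e : ℕ} (h : e ≤ t) : cardBound t p a e = p * a := by
  simp [cardBound, Nat.sub_eq_zero_of_le h]

theorem cardBound_succ {a e : ℕ} (h : t ≤ e) :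
    cardBound t p a (e + 1) = cardBound t p a e + (2 * a - 1) := by
  simp only [cardBound, Nat.sub_add_comm h]
  push_cast
  ring

theorem cardBound_mono (hp : 0 ≤ p) {a a' e e' : ℕ} (ha : a' ≤ a) (ha₁ : 1 ≤ a) (he : e' ≤ e) :
    cardBound t p a' e' ≤ cardBound t p a e := by
  have hm : ((e' - t : ℕ) : ℝ) ≤ ((e - t : ℕ) : ℝ) := by gcongr
  have ha : (a' : ℝ) ≤ a := by exact_mod_cast ha
  have ha₁ : (1 : ℝ) ≤ a := by exact_mod_cast ha₁
  have hm₀ : (0 : ℝ) ≤ ((e' - t : ℕ) : ℝ) := Nat.cast_nonneg _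
  unfold cardBound
  nlinarith [mul_le_mul_of_nonneg_right (by linarith : 2 * (a' : ℝ) - 1 ≤ 2 * a - 1) hm₀,
    mul_le_mul_of_nonneg_left hm (by linarith : (0 : ℝ) ≤ 2 * a - 1),
    mul_le_mul_of_nonneg_left ha hp]

theorem cardBound_add_le (a₁ a₂ e : ℕ) :
    cardBound t p a₁ e + cardBound t p a₂ e ≤ cardBound t p (a₁ + a₂) e := by
  unfold cardBound
  push_cast
  nlinarith [(Nat.cast_nonneg _ : (0 : ℝ) ≤ ((e - t : ℕ) : ℝ))]

end CardBound

section Induction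

variable {V : Type} [Fintype V] {G : SimpleGraph V} {t : ℕ} {p : ℝ}

theorem card_le_cardBound_of_connected (hp : 0 ≤ p) (hG : G.Connected) (hη : t < hadwigerNum G)
    (IH : ∀ s : Finset V, s ≠ Finset.univ →
      (s.card : ℝ) ≤ cardBound t p (G.induce ↑s).indepNum (hadwigerNum (G.induce ↑s))) :
    (Fintype.card V : ℝ) ≤ cardBound t p G.indepNum (hadwigerNum G) := by
  classical
  have := hG.nonempty
  obtain ⟨D, hD, hDc, hdom, hDcard⟩ := exists_isDomSet_isConnSet hG
  have hrest := IH Dᶜ (by simpa [Finset.compl_eq_univ_iff] using hD.ne_empty)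
  have hα := indepNum_le_of_embedding (Embedding.induce (G := G) ↑Dᶜ)
  have hη' := hadwigerNum_induce_add_one_le (G := G) (s := ↑Dᶜ) (Finset.coe_nonempty.mpr hD) hDc
    (Finset.disjoint_coe.mpr disjoint_compl_right) fun v hv => hdom v (by simpa using hv)
  obtain ⟨e, he⟩ : ∃ e, hadwigerNum G = e + 1 := Nat.exists_eq_add_one.mpr (by omega)
  rw [he] at hη hη' ⊢
  have hDcard' : (D.card : ℝ) ≤ 2 * G.indepNum - 1 := by
    have : ((D.card + 1 : ℕ) : ℝ) ≤ ((2 * G.indepNum : ℕ) : ℝ) := by exact_mod_cast hDcard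
    push_cast at this
    linarith
  calc (Fintype.card V : ℝ) = D.card + Dᶜ.card := by
        exact_mod_cast (Finset.card_add_card_compl D).symm
    _ ≤ (2 * G.indepNum - 1) + cardBound t p G.indepNum e := by
        grw [hDcard', hrest, cardBound_mono (e := e) hp hα (one_le_indepNum G) (by omega)]
    _ = cardBound t p G.indepNum (e + 1) := by rw [cardBound_succ (by omega), add_comm]

theorem card_le_cardBound_of_not_preconnected (hp : 0 ≤ p) (hG : ¬ G.Preconnected)
    (IH : ∀ s : Finset V, s ≠ Finset.univ →
      (s.card : ℝ) ≤ cardBound t p (G.induce ↑s).indepNum (hadwigerNum (G.induce ↑s))) :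
    (Fintype.card V : ℝ) ≤ cardBound t p G.indepNum (hadwigerNum G) := by
  classical
  obtain ⟨x, y, hxy⟩ : ∃ x y, ¬ G.Reachable x y := by simpa [Preconnected] using hG
  set S := Finset.univ.filter (G.Reachable x)
  have hxS : x ∈ S := by simp [S]
  have hyS : y ∉ S := by simpa [S] using hxy
  have hcut : ∀ a ∈ S, ∀ b ∉ S, ¬ G.Adj a b := fun a ha b hb hab => by
    simp only [S, Finset.mem_filter, Finset.mem_univ, true_and] at ha hb
    exact hb (ha.trans hab.reachable)
  have h₁ := IH S fun h => hyS (h ▸ Finset.mem_univ y)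
  have h₂ := IH Sᶜ fun h => Finset.mem_compl.mp (h ▸ Finset.mem_univ x) hxS
  have hα := indepNum_induce_add_indepNum_induce_compl_le S hcut
  have hα₁ : 1 ≤ (G.induce ↑S).indepNum :=
    have : Nonempty ↥(↑S : Set V) := ⟨⟨x, hxS⟩⟩
    one_le_indepNum _
  have hα₂ : 1 ≤ (G.induce ↑Sᶜ).indepNum :=
    have : Nonempty ↥(↑Sᶜ : Set V) := ⟨⟨y, by simpa using hyS⟩⟩
    one_le_indepNum _
  have hη₁ := hadwigerNum_le_of_embedding (Embedding.induce (G := G) ↑S)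
  have hη₂ := hadwigerNum_le_of_embedding (Embedding.induce (G := G) ↑Sᶜ)
  calc (Fintype.card V : ℝ) = S.card + Sᶜ.card := by
        exact_mod_cast (Finset.card_add_card_compl S).symm
    _ ≤ cardBound t p (G.induce ↑S).indepNum (hadwigerNum G)
          + cardBound t p (G.induce ↑Sᶜ).indepNum (hadwigerNum G) := by
        grw [h₁, h₂, cardBound_mono hp le_rfl hα₁ hη₁, cardBound_mono hp le_rfl hα₂ hη₂]
    _ ≤ cardBound t p ((G.induce ↑S).indepNum + (G.induce ↑Sᶜ).indepNum) (hadwigerNum G) :=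
        cardBound_add_le _ _ _
    _ ≤ cardBound t p G.indepNum (hadwigerNum G) := cardBound_mono hp hα (by omega) le_rfl

end Induction

theorem card_le_cardBound {t : ℕ} {p : ℝ} (hp : 0 ≤ p)
    (hyp : ∀ (W : Type) [Fintype W] (H : SimpleGraph W),
      hadwigerNum H ≤ t → (Fintype.card W : ℝ) ≤ p * H.indepNum)
    {V : Type} [Fintype V] (G : SimpleGraph V) :
    (Fintype.card V : ℝ) ≤ cardBound t p G.indepNum (hadwigerNum G) := by
  induction hn : Fintype.card V using Nat.strong_induction_on generalizing V with
  | _ n ih =>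
  subst hn
  have IH : ∀ s : Finset V, s ≠ Finset.univ →
      (s.card : ℝ) ≤ cardBound t p (G.induce ↑s).indepNum (hadwigerNum (G.induce ↑s)) :=
    fun s hs => by
      simpa using ih _ (by simpa using Finset.card_lt_card (Finset.ssubset_univ_iff.mpr hs))
        (G.induce ↑s) rfl
  rcases le_or_gt (hadwigerNum G) t with hη | hη
  · rw [cardBound_of_le hη]
    exact hyp V G hη
  by_cases hG : G.Preconnected
  · have : Nonempty V := Fintype.card_pos_iff.mp
      (((Nat.zero_le t).trans_lt hη).trans_le (hadwigerNum_le_card G))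
    exact card_le_cardBound_of_connected hp ⟨hG⟩ hη IH
  · exact card_le_cardBound_of_not_preconnected hp hG IH

theorem stmt_3 (t : ℕ) (ht : 1 ≤ t) (p : ℝ) (hp : (t : ℝ) ≤ p)
    (hyp : ∀ (W : Type) [Fintype W] (H : SimpleGraph W),
      hadwigerNum H ≤ t → (Fintype.card W : ℝ) ≤ p * _root_.indepNum H)
    {V : Type} [Fintype V] (G : SimpleGraph V) (hG : t ≤ hadwigerNum G) :
    (2 * Fintype.card V - p) / (4 * hadwigerNum G + 2 * p - 4 * t) + 1 / 2
      ≤ (_root_.indepNum G : ℝ) := by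
  simp only [indepNum_eq_indepNum] at hyp ⊢
  have ht' : (1 : ℝ) ≤ t := by exact_mod_cast ht
  have hbound := card_le_cardBound (by linarith) hyp G
  rw [cardBound, Nat.cast_sub hG] at hbound
  have hη : (t : ℝ) ≤ hadwigerNum G := by exact_mod_cast hG
  have hden : 0 < 4 * (hadwigerNum G : ℝ) + 2 * p - 4 * t := by linarith
  rw [← le_sub_iff_add_le, div_le_iff₀ hden]
  linarith
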